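/- arXiv:1706.02623 — 5 statements merged into one kernel-verified Lean document; each statement's English description precedes it below -/
import Mathlib

section
/- Let (𝔡, 𝔤, 𝔤*) be a Manin triple. Then the cobracket δ: 𝔤 → ∧²(𝔤) defined as the dual of the Lie bracket on 𝔤* endows 𝔤 with the structure of a Lie bialgebra, i.e. δ is a 1-cocycle for the adjoint action of 𝔤 on ∧²(𝔤) and its dual map ∧²(𝔤*) → 𝔤* satisfies the Jacobi identity. -/
/-!
Because `𝔤` and `𝔤*` are complementary and isotropic, nondegeneracy of `B` on `𝔡` makes its
restriction to `𝔤 × 𝔤*` a perfect pairing. Hence `𝔤 ⊗ 𝔤 ≅ (𝔤* ⊗ 𝔤*)^*`, so an element of `𝔤 ⊗ 𝔤`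
is determined by its pairings with the `ξ ⊗ η`, and `δ` is simply the transpose of the bracket of
`𝔤*`; uniqueness and antisymmetry are then formal. Paired with `ξ ⊗ η`, the cocycle identity
becomes an identity between values of `B`, which follows from invariance and the Leibniz rule
once `⁅y, ξ⁆` is split along `𝔡 = 𝔤 ⊕ 𝔤*`: the `𝔤`-component can be moved across `B` onto the
other side by the isotropy of both subalgebras.
-/

open TensorProduct

noncomputable section

variable {k : Type*} [Field k] [CharZero k]
variable {D : Type*} [LieRing D] [LieAlgebra k D] [FiniteDimensional k D]

/-- Pairing of `g ⊗ g` against `ξ ⊗ η ∈ 𝔡 ⊗ 𝔡` induced by a bilinear form `B` on `𝔡`. -/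
def pairSq (B : D →ₗ[k] D →ₗ[k] k) (g : LieSubalgebra k D) (ξ η : D) :
    (g ⊗[k] g) →ₗ[k] k :=
  (TensorProduct.lid k k).toLinearMap ∘ₗ
    TensorProduct.map ((B.flip ξ).comp g.toSubmodule.subtype)
      ((B.flip η).comp g.toSubmodule.subtype)

/-- The adjoint action of `x ∈ 𝔤` on `𝔤 ⊗ 𝔤`. -/
def adSq (g : LieSubalgebra k D) (x : g) : (g ⊗[k] g) →ₗ[k] (g ⊗[k] g) :=
  TensorProduct.map ((LieAlgebra.ad k g) x) LinearMap.id
    + TensorProduct.map LinearMap.id ((LieAlgebra.ad k g) x)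

section Isotropic

variable {K M : Type*} [Field K] [AddCommGroup M] [Module K M] {B : M →ₗ[K] M →ₗ[K] K}
  {U V : Submodule K M}

lemma apply_projection_of_isotropic (hU : ∀ x y : M, x ∈ U → y ∈ U → B x y = 0)
    (h : IsCompl U V) {p : M} (hp : p ∈ U) (c : M) :
    B p (V.projection U h.symm c) = B p c := by
  conv_rhs => rw [← Submodule.projection_add_projection_eq_self h c]
  rw [map_add, hU _ _ hp (Submodule.projection_apply_mem h c), zero_add]

lemma injective_domRestrict₁₂_of_isotropic (hBnd : ∀ x : M, (∀ y, B x y = 0) → x = 0)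
    (hU : ∀ x y : M, x ∈ U → y ∈ U → B x y = 0) (h : IsCompl U V) :
    Function.Injective (B.domRestrict₁₂ U V) := by
  rw [← LinearMap.ker_eq_bot, LinearMap.ker_eq_bot']
  intro x hx
  refine Subtype.ext (hBnd x fun c => ?_)
  rw [← apply_projection_of_isotropic hU h x.2 c]
  exact LinearMap.congr_fun hx ⟨_, Submodule.projection_apply_mem h.symm c⟩

lemma isPerfPair_domRestrict₁₂_of_isotropic [FiniteDimensional K U]
    (hBsymm : ∀ x y, B x y = B y x) (hBnd : ∀ x : M, (∀ y, B x y = 0) → x = 0)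
    (hU : ∀ x y : M, x ∈ U → y ∈ U → B x y = 0) (hV : ∀ x y : M, x ∈ V → y ∈ V → B x y = 0)
    (h : IsCompl U V) :
    (B.domRestrict₁₂ U V).IsPerfPair := by
  refine .of_injective (injective_domRestrict₁₂_of_isotropic hBnd hU h) ?_
  have hflip : (B.domRestrict₁₂ U V).flip = B.domRestrict₁₂ V U := by
    ext x y
    exact hBsymm _ _
  rw [hflip]
  exact injective_domRestrict₁₂_of_isotropic hBnd hV h.symm

end Isotropic

section Pairing

variable {K L : Type*} [Field K] [LieRing L] [LieAlgebra K L] (B : L →ₗ[K] L →ₗ[K] K)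
  (g : LieSubalgebra K L)

@[simp]
lemma pairSq_tmul (ξ η : L) (a b : g) :
    pairSq B g ξ η (a ⊗ₜ b) = B a ξ * B b η :=
  rfl

lemma pairSq_comm (ξ η : L) (t : g ⊗[K] g) :
    pairSq B g ξ η (TensorProduct.comm K g g t) = pairSq B g η ξ t := by
  induction t using TensorProduct.induction_on with
  | zero => simp
  | tmul a b => simp [mul_comm]
  | add s t hs ht => simp [hs, ht]

lemma pairSq_adSq (hBsymm : ∀ x y, B x y = B y x) (hBinv : ∀ x y z, B ⁅x, y⁆ z = B x ⁅y, z⁆)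
    (ξ η : L) (x : g) (t : g ⊗[K] g) :
    pairSq B g ξ η (adSq g x t) = pairSq B g ⁅ξ, x⁆ η t + pairSq B g ξ ⁅η, x⁆ t := by
  have hB : ∀ (a : g) (w : L), B ⁅(x : L), a⁆ w = B a ⁅w, x⁆ := fun a w => by
    rw [hBsymm, ← hBinv, hBsymm]
  induction t using TensorProduct.induction_on with
  | zero => simp
  | tmul a b => simp [adSq, hB]
  | add s t hs ht => simp only [map_add, hs, ht]; ring

lemma pairSq_projection (hiso : ∀ x y : L, x ∈ g → y ∈ g → B x y = 0) {g' : LieSubalgebra K L}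
    (hcompl : IsCompl g.toSubmodule g'.toSubmodule) (u v : L) :
    pairSq B g (g'.toSubmodule.projection g.toSubmodule hcompl.symm u)
      (g'.toSubmodule.projection g.toSubmodule hcompl.symm v) = pairSq B g u v := by
  ext a b
  simp [apply_projection_of_isotropic hiso hcompl a.2,
    apply_projection_of_isotropic hiso hcompl b.2]

end Pairing

section ManinIdentity

variable {K L : Type*} [Field K] [LieRing L] [LieAlgebra K L] {B : L →ₗ[K] L →ₗ[K] K}
  {g g' : LieSubalgebra K L}

lemma apply_lie_projection_lie (hBsymm : ∀ x y, B x y = B y x)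
    (hBinv : ∀ x y z, B ⁅x, y⁆ z = B x ⁅y, z⁆)
    (hiso : ∀ x y : L, x ∈ g → y ∈ g → B x y = 0)
    (hiso' : ∀ x y : L, x ∈ g' → y ∈ g' → B x y = 0)
    (hcompl : IsCompl g.toSubmodule g'.toSubmodule) (x y ξ η : L) :
    B x ⁅g.toSubmodule.projection g'.toSubmodule hcompl ⁅y, ξ⁆, η⁆ =
      B y ⁅ξ, g'.toSubmodule.projection g.toSubmodule hcompl.symm ⁅η, x⁆⁆ := by
  set p := g.toSubmodule.projection g'.toSubmodule hcompl ⁅y, ξ⁆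
  set q := g'.toSubmodule.projection g.toSubmodule hcompl.symm ⁅η, x⁆
  have hp : p ∈ g := Submodule.projection_apply_mem hcompl _
  have hq : q ∈ g' := Submodule.projection_apply_mem hcompl.symm _
  calc B x ⁅p, η⁆ = B p ⁅η, x⁆ := by rw [hBsymm, hBinv]
    _ = B q p := by rw [← apply_projection_of_isotropic hiso hcompl hp, hBsymm]
    _ = B q ⁅y, ξ⁆ := apply_projection_of_isotropic hiso' hcompl.symm hq _
    _ = B y ⁅ξ, q⁆ := by rw [hBsymm, hBinv]

lemma apply_lie_lie_eq (hBsymm : ∀ x y, B x y = B y x)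
    (hBinv : ∀ x y z, B ⁅x, y⁆ z = B x ⁅y, z⁆)
    (hiso : ∀ x y : L, x ∈ g → y ∈ g → B x y = 0)
    (hiso' : ∀ x y : L, x ∈ g' → y ∈ g' → B x y = 0)
    (hcompl : IsCompl g.toSubmodule g'.toSubmodule) (x y ξ η : L) :
    let π' := g'.toSubmodule.projection g.toSubmodule hcompl.symm
    B ⁅x, y⁆ ⁅ξ, η⁆ = B y ⁅π' ⁅ξ, x⁆, η⁆ + B y ⁅ξ, π' ⁅η, x⁆⁆
      - (B x ⁅π' ⁅ξ, y⁆, η⁆ + B x ⁅ξ, π' ⁅η, y⁆⁆) := by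
  intro π'
  set π := g.toSubmodule.projection g'.toSubmodule hcompl
  have hsplit (w : L) : w = π w + π' w :=
    (Submodule.projection_add_projection_eq_self hcompl w).symm
  have key (ξ η : L) : B x ⁅π ⁅y, ξ⁆, η⁆ = B y ⁅ξ, π' ⁅η, x⁆⁆ :=
    apply_lie_projection_lie hBsymm hBinv hiso hiso' hcompl x y ξ η
  calc B ⁅x, y⁆ ⁅ξ, η⁆ = B x ⁅⁅y, ξ⁆, η⁆ - B x ⁅⁅y, η⁆, ξ⁆ := by
        rw [hBinv, leibniz_lie, map_add, ← lie_skew ξ, map_neg, sub_eq_add_neg]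
    _ = B x ⁅π ⁅y, ξ⁆, η⁆ + B x ⁅π' ⁅y, ξ⁆, η⁆ - (B x ⁅π ⁅y, η⁆, ξ⁆ + B x ⁅π' ⁅y, η⁆, ξ⁆) := by
        conv_lhs => rw [hsplit ⁅y, ξ⁆, hsplit ⁅y, η⁆]
        simp only [add_lie, map_add]
    _ = _ := by
        rw [key, key, ← lie_skew y ξ, ← lie_skew y η, ← lie_skew η (π' ⁅ξ, x⁆),
          ← lie_skew ξ (π' ⁅η, y⁆)]
        simp only [map_neg, neg_lie]
        ring

end ManinIdentity

section Cobracket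

variable {K L : Type*} [Field K] [LieRing L] [LieAlgebra K L] (B : L →ₗ[K] L →ₗ[K] K)
  (g g' : LieSubalgebra K L) [FiniteDimensional K g']
  [(B.domRestrict₁₂ g.toSubmodule g'.toSubmodule).IsPerfPair]

def tensorDualEquiv : (g ⊗[K] g) ≃ₗ[K] Module.Dual K (g' ⊗[K] g') :=
  (TensorProduct.congr (B.domRestrict₁₂ g.toSubmodule g'.toSubmodule).toPerfPair
    (B.domRestrict₁₂ g.toSubmodule g'.toSubmodule).toPerfPair).trans
    (TensorProduct.dualDistribEquiv K g' g')

lemma tensorDualEquiv_apply_tmul (t : g ⊗[K] g) (ξ η : g') :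
    tensorDualEquiv B g g' t (ξ ⊗ₜ η) = pairSq B g ξ η t := by
  induction t using TensorProduct.induction_on with
  | zero => simp
  | tmul a b => rfl
  | add s t hs ht => simp [hs, ht]

lemma eq_of_pairSq_eq {s t : g ⊗[K] g} (h : ∀ ξ η : g', pairSq B g ξ η s = pairSq B g ξ η t) :
    s = t :=
  (tensorDualEquiv B g g').injective <| TensorProduct.ext' fun ξ η => by
    simp only [tensorDualEquiv_apply_tmul, h]

/-- The dual of the bracket `𝔤* ⊗ 𝔤* → 𝔤*`, with `𝔤* = g'` identified with the dual of `g`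
through `B`. -/
def cobracket : g →ₗ[K] g ⊗[K] g :=
  (tensorDualEquiv B g g').symm.toLinearMap ∘ₗ
    (LieModule.toModuleHom K g' g' : g' ⊗[K] g' →ₗ[K] g').dualMap ∘ₗ
    (B.domRestrict₁₂ g.toSubmodule g'.toSubmodule)

lemma pairSq_cobracket_of_mem (x : g) (ξ η : g') :
    pairSq B g ξ η (cobracket B g g' x) = B x ⁅(ξ : L), η⁆ := by
  rw [← tensorDualEquiv_apply_tmul]
  simp only [cobracket, LinearMap.comp_apply, LinearEquiv.coe_coe, LinearEquiv.apply_symm_apply,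
    LinearMap.dualMap_apply, LieModuleHom.coe_toLinearMap, LieModule.toModuleHom_apply]
  rfl

lemma eq_cobracket_of_pairSq {δ : g →ₗ[K] g ⊗[K] g}
    (hδ : ∀ (x : g) (ξ η : g'), pairSq B g ξ η (δ x) = B x ⁅(ξ : L), η⁆) :
    δ = cobracket B g g' :=
  LinearMap.ext fun x => eq_of_pairSq_eq B g g' fun ξ η => by
    rw [hδ, pairSq_cobracket_of_mem]

lemma comm_cobracket (x : g) :
    TensorProduct.comm K g g (cobracket B g g' x) = -cobracket B g g' x :=
  eq_of_pairSq_eq B g g' fun ξ η => by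
    rw [pairSq_comm, map_neg, pairSq_cobracket_of_mem, pairSq_cobracket_of_mem, ← lie_skew,
      map_neg]

lemma pairSq_cobracket (hiso : ∀ x y : L, x ∈ g → y ∈ g → B x y = 0)
    (hcompl : IsCompl g.toSubmodule g'.toSubmodule) (x : g) (u v : L) :
    pairSq B g u v (cobracket B g g' x) =
      B x ⁅g'.toSubmodule.projection g.toSubmodule hcompl.symm u,
        g'.toSubmodule.projection g.toSubmodule hcompl.symm v⁆ := by
  rw [← pairSq_projection B g hiso hcompl u v]
  exact pairSq_cobracket_of_mem B g g' x ⟨_, Submodule.projection_apply_mem _ u⟩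
    ⟨_, Submodule.projection_apply_mem _ v⟩

lemma cobracket_lie (hBsymm : ∀ x y, B x y = B y x) (hBinv : ∀ x y z, B ⁅x, y⁆ z = B x ⁅y, z⁆)
    (hiso : ∀ x y : L, x ∈ g → y ∈ g → B x y = 0)
    (hiso' : ∀ x y : L, x ∈ g' → y ∈ g' → B x y = 0)
    (hcompl : IsCompl g.toSubmodule g'.toSubmodule) (x y : g) :
    cobracket B g g' ⁅x, y⁆ =
      adSq g x (cobracket B g g' y) - adSq g y (cobracket B g g' x) :=
  eq_of_pairSq_eq B g g' fun ξ η => by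
    have hproj (ζ : g') : g'.toSubmodule.projection g.toSubmodule hcompl.symm ζ = ζ :=
      (Submodule.projection_eq_self_iff _ _).2 ζ.2
    simp only [map_sub, pairSq_adSq B g hBsymm hBinv, pairSq_cobracket B g g' hiso hcompl,
      LieSubalgebra.coe_bracket, hproj]
    exact apply_lie_lie_eq hBsymm hBinv hiso hiso' hcompl x y ξ η

end Cobracket

lemma lie_jacobi' {L : Type*} [LieRing L] (x y z : L) :
    ⁅⁅x, y⁆, z⁆ + ⁅⁅y, z⁆, x⁆ + ⁅⁅z, x⁆, y⁆ = 0 := by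
  rw [← lie_skew ⁅x, y⁆ z, ← lie_skew ⁅y, z⁆ x, ← lie_skew ⁅z, x⁆ y, ← neg_add, ← neg_add,
    neg_eq_zero, lie_jacobi]

/-- Manin triples give Lie bialgebras: if `B` is a nondegenerate
invariant symmetric pairing on `𝔡` and `g, g' ⊂ 𝔡` are complementary Lagrangian
(isotropic) Lie subalgebras, then there is a unique linear `δ : 𝔤 → 𝔤 ⊗ 𝔤` dual to the
bracket of `𝔤* = g'`; it is antisymmetric, a 1-cocycle for the adjoint action, and its
dual map — the Lie bracket of `g' ≅ 𝔤*` — satisfies the Jacobi identity. -/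
theorem maninTriple_lieBialgebra
    (B : D →ₗ[k] D →ₗ[k] k)
    (hBsymm : ∀ x y, B x y = B y x)
    (hBinv : ∀ x y z, B ⁅x, y⁆ z = B x ⁅y, z⁆)
    (hBnd : ∀ x : D, (∀ y, B x y = 0) → x = 0)
    (g g' : LieSubalgebra k D)
    (hiso : ∀ x y : D, x ∈ g → y ∈ g → B x y = 0)
    (hiso' : ∀ x y : D, x ∈ g' → y ∈ g' → B x y = 0)
    (hcompl : IsCompl g.toSubmodule g'.toSubmodule) :
    ∃! δ : g →ₗ[k] (g ⊗[k] g),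
      (∀ (x : g) (ξ η : D) (hξ : ξ ∈ g') (hη : η ∈ g'),
          pairSq B g ξ η (δ x) = B (x : D) ⁅ξ, η⁆) ∧
      (∀ x : g, (TensorProduct.comm k g g) (δ x) = - δ x) ∧
      (∀ x y : g, δ ⁅x, y⁆ = adSq g x (δ y) - adSq g y (δ x)) ∧
      (∀ ξ η ζ : g', ⁅⁅ξ, η⁆, ζ⁆ + ⁅⁅η, ζ⁆, ξ⁆ + ⁅⁅ζ, ξ⁆, η⁆ = 0) := by
  have := isPerfPair_domRestrict₁₂_of_isotropic hBsymm hBnd hiso hiso' hcompl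
  refine ⟨cobracket B g g', ⟨?_, comm_cobracket B g g',
    cobracket_lie B g g' hBsymm hBinv hiso hiso' hcompl, lie_jacobi'⟩, ?_⟩
  · exact fun x ξ η hξ hη => pairSq_cobracket_of_mem B g g' x ⟨ξ, hξ⟩ ⟨η, hη⟩
  · exact fun δ hδ => eq_cobracket_of_pairSq B g g' fun x ξ η => hδ.1 x ξ η ξ.2 η.2

end
end

section
/- The twisting operation on quasi-Lie bialgebra structures is functorial: if λ twists (δ₁,φ₁) into (δ₂,φ₂) and μ twists (δ₂,φ₂) into (δ₃,φ₃), then λ+μ twists (δ₁,φ₁) into (δ₃,φ₃). Consequently quasi-Lie bialgebra structures on 𝔤 with twists as morphisms form a groupoid, with the inverse of a twist λ given by -λ. -/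
/-!
STATEMENT 3: Twists of quasi-Lie bialgebra structures compose additively, the zero twist
is the identity, and the inverse of a twist `λ` is `-λ`; consequently quasi-Lie bialgebra
structures on `𝔤` with twists as morphisms form a groupoid.

Coordinates as in the quasi-Lie bialgebra framework: structure constants `f`,
cobracket components `δ p i j`, trivector components `φ i j l`, bivector `λ i j`.
-/

open Finset

variable {k ι : Type*}

/-- Antisymmetry of structure constants. -/
def LieAntisymm [Field k] (f : ι → ι → ι → k) : Prop :=
  ∀ i j l, f i j l = - f j i l

/-- Jacobi identity for structure constants. -/
def LieJacobi [Field k] [Fintype ι] (f : ι → ι → ι → k) : Prop :=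
  ∀ i j l m, ∑ a, (f i j a * f a l m + f j l a * f a i m + f l i a * f a j m) = 0

/-- Components of the Chevalley–Eilenberg differential `(d_CE δ)(e_p, e_q)^{ij}` of a
`∧²𝔤`-valued 1-cochain `δ` (adjoint action coefficients), i.e.
`e_p·δ(e_q) - e_q·δ(e_p) - δ(⁅e_p,e_q⁆)`. -/
def dCEone [Field k] [Fintype ι] (f δ : ι → ι → ι → k) (p q i j : ι) : k :=
  (∑ a, (f p a i * δ q a j + f p a j * δ q i a))
    - (∑ a, (f q a i * δ p a j + f q a j * δ p i a))
    - (∑ a, f p q a * δ a i j)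

/-- Components of the Chevalley–Eilenberg differential `(d_CE λ)(e_p)^{ij} = (e_p·λ)^{ij}`
of a `∧²𝔤`-valued 0-cochain (bivector) `λ`. -/
def dCEtwo [Field k] [Fintype ι] (f : ι → ι → ι → k) (lam : ι → ι → k) (p i j : ι) : k :=
  ∑ a, (f p a i * lam a j + f p a j * lam i a)

/-- Components of the adjoint action `(e_p · φ)^{ijl}` of `𝔤` on a trivector `φ ∈ ∧³𝔤`;
this is `(d_CE φ)(e_p)` for the 0-cochain `φ`. -/
def adActTri [Field k] [Fintype ι] (f : ι → ι → ι → k) (φ : ι → ι → ι → k)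
    (p i j l : ι) : k :=
  ∑ a, (f p a i * φ a j l + f p a j * φ i a l + f p a l * φ i j a)

/-- Components of the co-Jacobiator `(1/2)[δ,δ](e_p)^{ijl}`: the cyclic sum of
`(δ ⊗ id) ∘ δ`. -/
def coJac [Field k] [Fintype ι] (δ : ι → ι → ι → k) (p i j l : ι) : k :=
  ∑ a, (δ p a l * δ a i j + δ p a i * δ a j l + δ p a j * δ a l i)

/-- Components of the big bracket `[δ, λ]^{ijl}` of a cobracket `δ` with a bivector `λ`
(contraction of the `𝔤*`-leg of `δ` with one leg of `λ`, wedged). -/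
def bigBr [Field k] [Fintype ι] (δ : ι → ι → ι → k) (lam : ι → ι → k) (i j l : ι) : k :=
  ∑ a, (lam a i * δ a j l + lam a j * δ a l i + lam a l * δ a i j)

/-- Components of `(1/2)⟦λ,λ⟧^{ijl}`, the (halved) algebraic Schouten bracket of the
bivector `λ` with itself. -/
def halfSch [Field k] [Fintype ι] (f : ι → ι → ι → k) (lam : ι → ι → k) (i j l : ι) : k :=
  ∑ a, ∑ b, (lam a i * lam b j * f a b l + lam a j * lam b l * f a b i
      + lam a l * lam b i * f a b j)

/-- Components of the big bracket `[δ, φ]` of a cobracket with a trivector: the full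
antisymmetrization (over `S₄`) of the contraction `∑ a, δ a i j * φ a l m`. -/
def bigBrTri [Field k] [Fintype ι] (δ φ : ι → ι → ι → k) (i j l m : ι) : k :=
  ∑ σ : Equiv.Perm (Fin 4),
    ((Equiv.Perm.sign σ : ℤ) : k) *
      ∑ a, δ a (![i, j, l, m] (σ 0)) (![i, j, l, m] (σ 1))
        * φ a (![i, j, l, m] (σ 2)) (![i, j, l, m] (σ 3))

/-- A quasi-Lie bialgebra structure `(δ, φ)` on the Lie algebra with structure constants
`f`: `δ` and `φ` are antisymmetric, `d_CE δ = 0`, `(1/2)[δ,δ] + d_CE φ = 0` and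
`[δ, φ] = 0`. -/
def IsQuasiLieBialgebra [Field k] [Fintype ι] (f δ φ : ι → ι → ι → k) : Prop :=
  (∀ p i j, δ p i j = - δ p j i) ∧
  (∀ i j l, φ i j l = - φ j i l) ∧ (∀ i j l, φ i j l = - φ i l j) ∧
  (∀ p q i j, dCEone f δ p q i j = 0) ∧
  (∀ p i j l, coJac δ p i j l + adActTri f φ p i j l = 0) ∧
  (∀ i j l m, bigBrTri δ φ i j l m = 0)


/-- `λ` twists the quasi-Lie bialgebra structure `(δ₁, φ₁)` into `(δ₂, φ₂)`:
`δ₂ = δ₁ + d_CE λ` and `φ₂ = φ₁ + [δ₁, λ] - (1/2)⟦λ,λ⟧`. -/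
def IsTwist [Field k] [Fintype ι] (f δ₁ φ₁ δ₂ φ₂ : ι → ι → ι → k)
    (lam : ι → ι → k) : Prop :=
  (∀ p i j, δ₂ p i j = δ₁ p i j + dCEtwo f lam p i j) ∧
  (∀ i j l, φ₂ i j l = φ₁ i j l + bigBr δ₁ lam i j l - halfSch f lam i j l)


/-!
Twisting is affine in `λ` except for the quadratic term `(1/2)⟦λ,λ⟧`, and the only thing to
check is that this term polarizes correctly: for antisymmetric structure constants and
antisymmetric `λ`, the cross term of `(1/2)⟦λ + μ, λ + μ⟧` is `-[d_CE λ, μ]`. Twisting first by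
`λ` replaces `δ₁` by `δ₁ + d_CE λ` in the big bracket with `μ`, which produces exactly this
cross term. The inverse is the case `μ = -λ`.
-/

theorem Finset.sum_sum_eq_zero_of_antisymm {α M : Type*} [AddCommGroup M] [IsAddTorsionFree M]
    (s : Finset α) (g : α → α → M) (hg : ∀ a b, g a b = -g b a) :
    ∑ a ∈ s, ∑ b ∈ s, g a b = 0 := by
  refine self_eq_neg.mp ?_
  calc ∑ a ∈ s, ∑ b ∈ s, g a b = ∑ a ∈ s, ∑ b ∈ s, -g b a := by simp only [← hg]
    _ = -∑ a ∈ s, ∑ b ∈ s, g a b := by rw [Finset.sum_comm]; simp only [Finset.sum_neg_distrib]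

section Twist

variable [Field k] [Fintype ι]

theorem dCEtwo_add (f : ι → ι → ι → k) (lam mu : ι → ι → k) (p i j : ι) :
    dCEtwo f (lam + mu) p i j = dCEtwo f lam p i j + dCEtwo f mu p i j := by
  simp only [dCEtwo, Pi.add_apply, ← Finset.sum_add_distrib]
  exact Finset.sum_congr rfl fun _ _ => by ring

theorem dCEtwo_neg (f : ι → ι → ι → k) (lam : ι → ι → k) (p i j : ι) :
    dCEtwo f (-lam) p i j = -dCEtwo f lam p i j := by
  simp only [dCEtwo, Pi.neg_apply, ← Finset.sum_neg_distrib]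
  exact Finset.sum_congr rfl fun _ _ => by ring

theorem bigBr_add_left (δ δ' : ι → ι → ι → k) (lam : ι → ι → k) (i j l : ι) :
    bigBr (δ + δ') lam i j l = bigBr δ lam i j l + bigBr δ' lam i j l := by
  simp only [bigBr, Pi.add_apply, ← Finset.sum_add_distrib]
  exact Finset.sum_congr rfl fun _ _ => by ring

theorem bigBr_add_right (δ : ι → ι → ι → k) (lam mu : ι → ι → k) (i j l : ι) :
    bigBr δ (lam + mu) i j l = bigBr δ lam i j l + bigBr δ mu i j l := by
  simp only [bigBr, Pi.add_apply, ← Finset.sum_add_distrib]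
  exact Finset.sum_congr rfl fun _ _ => by ring

theorem bigBr_neg_right (δ : ι → ι → ι → k) (lam : ι → ι → k) (i j l : ι) :
    bigBr δ (-lam) i j l = -bigBr δ lam i j l := by
  simp only [bigBr, Pi.neg_apply, ← Finset.sum_neg_distrib]
  exact Finset.sum_congr rfl fun _ _ => by ring

theorem halfSch_neg (f : ι → ι → ι → k) (lam : ι → ι → k) (i j l : ι) :
    halfSch f (-lam) i j l = halfSch f lam i j l := by
  simp only [halfSch, Pi.neg_apply, neg_mul_neg]

theorem halfSch_zero (f : ι → ι → ι → k) (i j l : ι) : halfSch f 0 i j l = 0 := by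
  simp [halfSch]

theorem halfSch_add [CharZero k] {f : ι → ι → ι → k} (hf : LieAntisymm f)
    {lam : ι → ι → k} (hlam : ∀ i j, lam i j = -lam j i) (mu : ι → ι → k) (i j l : ι) :
    halfSch f (lam + mu) i j l
      = halfSch f lam i j l + halfSch f mu i j l - bigBr (dCEtwo f lam) mu i j l := by
  rw [← sub_eq_zero]
  simp only [halfSch, bigBr, dCEtwo, Pi.add_apply, Finset.mul_sum, ← Finset.sum_add_distrib,
    ← Finset.sum_sub_distrib]
  -- after the contraction indices are matched, the remaining summand is antisymmetric in them
  refine Finset.sum_sum_eq_zero_of_antisymm _ _ fun a b => ?_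
  rw [hf b a i, hf b a j, hf b a l, hlam j b, hlam l b, hlam i b, hlam j a, hlam l a, hlam i a]
  ring

theorem IsTwist.trans [CharZero k] {f : ι → ι → ι → k} (hf : LieAntisymm f)
    {δ₁ φ₁ δ₂ φ₂ δ₃ φ₃ : ι → ι → ι → k} {lam mu : ι → ι → k}
    (hlam : ∀ i j, lam i j = -lam j i)
    (h₁₂ : IsTwist f δ₁ φ₁ δ₂ φ₂ lam) (h₂₃ : IsTwist f δ₂ φ₂ δ₃ φ₃ mu) :
    IsTwist f δ₁ φ₁ δ₃ φ₃ (lam + mu) := by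
  obtain ⟨hδ₁₂, hφ₁₂⟩ := h₁₂
  obtain ⟨hδ₂₃, hφ₂₃⟩ := h₂₃
  have hδ₂ : δ₂ = δ₁ + dCEtwo f lam := funext₃ hδ₁₂
  refine ⟨fun p i j => ?_, fun i j l => ?_⟩
  · rw [hδ₂₃, hδ₁₂, dCEtwo_add]
    ring
  · rw [hφ₂₃, hφ₁₂, hδ₂, bigBr_add_left, bigBr_add_right, halfSch_add hf hlam]
    ring

theorem isTwist_zero (f δ φ : ι → ι → ι → k) : IsTwist f δ φ δ φ 0 :=
  ⟨fun _ _ _ => by simp [dCEtwo], fun _ _ _ => by simp [bigBr, halfSch_zero]⟩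

theorem IsTwist.symm [CharZero k] {f : ι → ι → ι → k} (hf : LieAntisymm f)
    {δ₁ φ₁ δ₂ φ₂ : ι → ι → ι → k} {lam : ι → ι → k} (hlam : ∀ i j, lam i j = -lam j i)
    (h : IsTwist f δ₁ φ₁ δ₂ φ₂ lam) : IsTwist f δ₂ φ₂ δ₁ φ₁ (-lam) := by
  obtain ⟨hδ, hφ⟩ := h
  have hδ₂ : δ₂ = δ₁ + dCEtwo f lam := funext₃ hδ
  refine ⟨fun p i j => ?_, fun i j l => ?_⟩
  · rw [dCEtwo_neg, hδ]
    ring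
  · have hcancel := halfSch_add hf hlam (-lam) i j l
    rw [add_neg_cancel, halfSch_zero, halfSch_neg, bigBr_neg_right] at hcancel
    rw [hφ, hδ₂, bigBr_neg_right, bigBr_add_left, halfSch_neg]
    linear_combination (-1 : k) * hcancel

end Twist

theorem twist_comp_zero_inv_general [Field k] [CharZero k] [Fintype ι]
    (f : ι → ι → ι → k) (hf₁ : LieAntisymm f) :
    (∀ (δ₁ φ₁ δ₂ φ₂ δ₃ φ₃ : ι → ι → ι → k) (lam mu : ι → ι → k),
        IsQuasiLieBialgebra f δ₁ φ₁ →
        (∀ i j, lam i j = - lam j i) → (∀ i j, mu i j = - mu j i) →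
        IsTwist f δ₁ φ₁ δ₂ φ₂ lam → IsTwist f δ₂ φ₂ δ₃ φ₃ mu →
        IsTwist f δ₁ φ₁ δ₃ φ₃ (fun i j => lam i j + mu i j)) ∧
    (∀ (δ φ : ι → ι → ι → k), IsQuasiLieBialgebra f δ φ →
        IsTwist f δ φ δ φ (fun _ _ => (0 : k))) ∧
    (∀ (δ₁ φ₁ δ₂ φ₂ : ι → ι → ι → k) (lam : ι → ι → k),
        IsQuasiLieBialgebra f δ₁ φ₁ → (∀ i j, lam i j = - lam j i) →
        IsTwist f δ₁ φ₁ δ₂ φ₂ lam →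
        IsTwist f δ₂ φ₂ δ₁ φ₁ (fun i j => - lam i j)) :=
  ⟨fun _ _ _ _ _ _ _ _ _ hlam _ h₁₂ h₂₃ => h₁₂.trans hf₁ hlam h₂₃,
    fun δ φ _ => isTwist_zero f δ φ,
    fun _ _ _ _ _ _ hlam h => h.symm hf₁ hlam⟩

/-- Functoriality of twisting: if `λ` twists `(δ₁,φ₁)` into `(δ₂,φ₂)` and
`μ` twists `(δ₂,φ₂)` into `(δ₃,φ₃)`, then `λ + μ` twists `(δ₁,φ₁)` into `(δ₃,φ₃)`;
the zero bivector twists every structure into itself; and `-λ` twists `(δ₂,φ₂)` back into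
`(δ₁,φ₁)`.  Hence quasi-Lie bialgebra structures with twists as morphisms form a
groupoid, with the inverse of `λ` given by `-λ`. -/
theorem twist_comp_zero_inv [Field k] [CharZero k] [Fintype ι] [DecidableEq ι]
    (f : ι → ι → ι → k) (hf₁ : LieAntisymm f) (hf₂ : LieJacobi f) :
    (∀ (δ₁ φ₁ δ₂ φ₂ δ₃ φ₃ : ι → ι → ι → k) (lam mu : ι → ι → k),
        IsQuasiLieBialgebra f δ₁ φ₁ →
        (∀ i j, lam i j = - lam j i) → (∀ i j, mu i j = - mu j i) →
        IsTwist f δ₁ φ₁ δ₂ φ₂ lam → IsTwist f δ₂ φ₂ δ₃ φ₃ mu →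
        IsTwist f δ₁ φ₁ δ₃ φ₃ (fun i j => lam i j + mu i j)) ∧
    (∀ (δ φ : ι → ι → ι → k), IsQuasiLieBialgebra f δ φ →
        IsTwist f δ φ δ φ (fun _ _ => (0 : k))) ∧
    (∀ (δ₁ φ₁ δ₂ φ₂ : ι → ι → ι → k) (lam : ι → ι → k),
        IsQuasiLieBialgebra f δ₁ φ₁ → (∀ i j, lam i j = - lam j i) →
        IsTwist f δ₁ φ₁ δ₂ φ₂ lam →
        IsTwist f δ₂ φ₂ δ₁ φ₁ (fun i j => - lam i j)) :=
  twist_comp_zero_inv_general f hf₁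
end

section
/- Let 𝔤 be a finite-dimensional Lie algebra and c ∈ Sym²(𝔤) invariant. Then φ := −(1/6)[c₁₂, c₂₃] ∈ U(𝔤)⊗³ lies in ∧³(𝔤) (i.e. it is totally antisymmetric and lies in 𝔤⊗𝔤⊗𝔤 ⊂ U(𝔤)⊗³) and is 𝔤-invariant. -/
/-!
STATEMENT 11: For a finite-dimensional Lie algebra `𝔤` and an invariant symmetric
element `c ∈ Sym²(𝔤)`, the element `φ := -(1/6)[c₁₂, c₂₃] ∈ U(𝔤)^{⊗3}` lies in
`∧³(𝔤) ⊂ 𝔤^{⊗3}` (it is totally antisymmetric) and is `𝔤`-invariant.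

In coordinates (basis `e_i`, structure constants `f`, `c = ∑ c i j • e_i ⊗ e_j`),
the commutator `[c₁₂, c₂₃]` computed in `U(𝔤)^{⊗3}` lands in `𝔤^{⊗3}` with components
`[c₁₂,c₂₃]^{ijl} = ∑ b b', c i b * f b b' j * c b' l`, so `φ` has the components
`phiOf` below; total antisymmetry and invariance are then the stated conclusions.
-/

open Finset

variable {k ι : Type*}

/-- Invariance of `c ∈ 𝔤 ⊗ 𝔤` under the adjoint action: `e_p · c = 0` for all `p`. -/
def casimirInvariant [Field k] [Fintype ι] (f : ι → ι → ι → k) (c : ι → ι → k) : Prop :=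
  ∀ p i j, ∑ a, (f p a i * c a j + f p a j * c i a) = 0

/-- Components of `φ = -(1/6)[c₁₂, c₂₃]`, the commutator being computed in
`U(𝔤)^{⊗3}`:  `[c₁₂,c₂₃] = ∑ c^{ib} c^{b'l} e_i ⊗ ⁅e_b, e_{b'}⁆ ⊗ e_l ∈ 𝔤^{⊗3}`. -/
def phiOf [Field k] [Fintype ι] (f : ι → ι → ι → k) (c : ι → ι → k) (i j l : ι) : k :=
  -(1/6 : k) * ∑ b, ∑ b', c i b * f b b' j * c b' l

/-! Write `A_p = (f p a i)_{a,i}` for the matrix of `ad e_p` and `F_j = (f a b j)_{a,b}` for the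
`j`-th component of the bracket, so that `φ(·, j, ·) = -(1/6) • c F_j c`. Invariance of `c` reads
`A_pᵀ c = -c A_p` and the Jacobi identity reads `A_p F_j + F_j A_pᵀ = ∑ a, f p a j • F_a`.
Antisymmetry in the outer legs is `(c F_j c)ᵀ = -c F_j c`; in the first two legs it holds because
`(c F_j)_{i b} = -(c A_b)_{i j}` and `c A_b` is skew by invariance. The adjoint action on `φ` is
`-(1/6) • (A_pᵀ c F_j c + c (A_p F_j + F_j A_pᵀ) c + c F_j c A_p)`, which vanishes once both outer
`A_p` are moved across `c`. -/

open scoped Matrix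

section

variable [Field k]

def adMatrix (f : ι → ι → ι → k) (p : ι) : Matrix ι ι k := Matrix.of fun a i => f p a i

def bracketMatrix (f : ι → ι → ι → k) (j : ι) : Matrix ι ι k := Matrix.of fun a b => f a b j

variable {f : ι → ι → ι → k} {c : Matrix ι ι k}

theorem LieAntisymm.transpose_bracketMatrix (hf : LieAntisymm f) (j : ι) :
    (bracketMatrix f j)ᵀ = -bracketMatrix f j := by
  ext a b
  simp [bracketMatrix, hf a b j]

variable [Fintype ι]

theorem LieAntisymm.mul_bracketMatrix_apply (hf : LieAntisymm f) (c : Matrix ι ι k) (i j b : ι) :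
    (c * bracketMatrix f j) i b = -(c * adMatrix f b) i j := by
  simp [Matrix.mul_apply, bracketMatrix, adMatrix, hf _ b j, ← Finset.sum_neg_distrib]

theorem casimirInvariant.transpose_adMatrix_mul (hc : casimirInvariant f c) (p : ι) :
    (adMatrix f p)ᵀ * c = -(c * adMatrix f p) := by
  ext i j
  simpa [Matrix.mul_apply, adMatrix, Finset.sum_add_distrib, mul_comm, add_eq_zero_iff_eq_neg]
    using hc p i j

theorem casimirInvariant.transpose_mul_adMatrix (hc : casimirInvariant f c) (hsymm : c.IsSymm)
    (p : ι) : (c * adMatrix f p)ᵀ = -(c * adMatrix f p) := by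
  rw [Matrix.transpose_mul, hsymm.eq, hc.transpose_adMatrix_mul]

theorem LieJacobi.adMatrix_mul_bracketMatrix (hf : LieAntisymm f) (hJ : LieJacobi f) (p j : ι) :
    adMatrix f p * bracketMatrix f j + bracketMatrix f j * (adMatrix f p)ᵀ
      = ∑ a, f p a j • bracketMatrix f a := by
  ext b b'
  simp only [Matrix.add_apply, Matrix.mul_apply, Matrix.transpose_apply, Matrix.sum_apply,
    Matrix.smul_apply, adMatrix, bracketMatrix, Matrix.of_apply, smul_eq_mul,
    ← Finset.sum_add_distrib]
  rw [← sub_eq_zero, ← Finset.sum_sub_distrib, ← hJ p b b' j]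
  refine Finset.sum_congr rfl fun a _ => ?_
  rw [hf a p j, hf b' p a, hf a b j]
  ring

theorem phiOf_apply (f : ι → ι → ι → k) (c : Matrix ι ι k) (i j l : ι) :
    phiOf f c i j l = -(1/6 : k) * (c * bracketMatrix f j * c) i l := by
  simp only [phiOf, Matrix.mul_apply, bracketMatrix, Matrix.of_apply, Finset.sum_mul]
  rw [Finset.sum_comm]

theorem adActTri_eq {φ : ι → ι → ι → k} (f : ι → ι → ι → k) {M : ι → Matrix ι ι k}
    (hφ : ∀ i j l, φ i j l = M j i l) (p i j l : ι) :
    adActTri f φ p i j l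
      = ((adMatrix f p)ᵀ * M j + ∑ a, f p a j • M a + M j * adMatrix f p) i l := by
  simp only [adActTri, hφ, Matrix.add_apply, Matrix.mul_apply, Matrix.transpose_apply,
    Matrix.sum_apply, Matrix.smul_apply, adMatrix, Matrix.of_apply, smul_eq_mul,
    Finset.sum_add_distrib]
  congr 1
  simp only [mul_comm]

theorem phiOf_swap13 (hf : LieAntisymm f) (hsymm : c.IsSymm) (i j l : ι) :
    phiOf f c i j l = -phiOf f c l j i := by
  have h : (c * bracketMatrix f j * c)ᵀ = -(c * bracketMatrix f j * c) := by
    rw [Matrix.transpose_mul, Matrix.transpose_mul, hf.transpose_bracketMatrix, hsymm.eq]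
    noncomm_ring
  rw [phiOf_apply, phiOf_apply, ← Matrix.transpose_apply (c * bracketMatrix f j * c) l i, h,
    Matrix.neg_apply, mul_neg]

theorem phiOf_swap12 (hf : LieAntisymm f) (hc : casimirInvariant f c) (hsymm : c.IsSymm)
    (i j l : ι) : phiOf f c i j l = -phiOf f c j i l := by
  have h : ∀ b, (c * bracketMatrix f j) i b = -(c * bracketMatrix f i) j b := fun b => by
    rw [hf.mul_bracketMatrix_apply, hf.mul_bracketMatrix_apply,
      ← Matrix.transpose_apply (c * adMatrix f b), hc.transpose_mul_adMatrix hsymm]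
    simp
  simp [phiOf_apply, Matrix.mul_apply, h, Finset.sum_neg_distrib]

theorem phiOf_swap23 (hf : LieAntisymm f) (hc : casimirInvariant f c) (hsymm : c.IsSymm)
    (i j l : ι) : phiOf f c i j l = -phiOf f c i l j := by
  rw [phiOf_swap13 hf hsymm i j l, phiOf_swap12 hf hc hsymm l j i,
    phiOf_swap13 hf hsymm j l i, neg_neg]

theorem adActTri_phiOf (hf : LieAntisymm f) (hJ : LieJacobi f) (hc : casimirInvariant f c)
    (p i j l : ι) : adActTri f (phiOf f c) p i j l = 0 := by
  rw [adActTri_eq f (M := fun j => -(1/6 : k) • (c * bracketMatrix f j * c))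
    (by simp [phiOf_apply])]
  set A := adMatrix f p
  set F := bracketMatrix f j
  have hAc : Aᵀ * c = -(c * A) := hc.transpose_adMatrix_mul p
  have left : Aᵀ * (c * F * c) = -(c * A * F * c) := by
    rw [← Matrix.mul_assoc, ← Matrix.mul_assoc, hAc]
    noncomm_ring
  have right : c * F * c * A = -(c * F * Aᵀ * c) := by
    rw [Matrix.mul_assoc (c * F), ← neg_neg (c * A), ← hAc]
    noncomm_ring
  have middle : ∑ a, f p a j • (c * bracketMatrix f a * c) = c * (A * F + F * Aᵀ) * c := by
    simp [hJ.adMatrix_mul_bracketMatrix hf, A, F, Matrix.mul_sum, Matrix.sum_mul]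
  have key : Aᵀ * (c * F * c) + c * (A * F + F * Aᵀ) * c + c * F * c * A = 0 := by
    rw [left, right]
    noncomm_ring
  simp only [Matrix.mul_smul, Matrix.smul_mul, smul_comm (f p _ j), ← Finset.smul_sum,
    ← smul_add, middle, key, smul_zero, Matrix.zero_apply]

end

theorem phi_of_casimir_antisymm_invariant_general [Field k] [Fintype ι]
    (f : ι → ι → ι → k) (c : ι → ι → k)
    (hf₁ : LieAntisymm f) (hf₂ : LieJacobi f)
    (hsymm : ∀ i j, c i j = c j i) (hinv : casimirInvariant f c) :
    (∀ i j l, phiOf f c i j l = - phiOf f c j i l) ∧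
    (∀ i j l, phiOf f c i j l = - phiOf f c i l j) ∧
    (∀ p i j l, adActTri f (phiOf f c) p i j l = 0) := by
  have hc : Matrix.IsSymm (c : Matrix ι ι k) := .ext fun i j => hsymm j i
  exact ⟨phiOf_swap12 hf₁ hinv hc, phiOf_swap23 hf₁ hinv hc, adActTri_phiOf hf₁ hf₂ hinv⟩

/-- If `c ∈ Sym²(𝔤)` is invariant then
`φ = -(1/6)[c₁₂,c₂₃] ∈ U(𝔤)^{⊗3}` is totally antisymmetric (i.e. lies in
`∧³(𝔤) ⊂ 𝔤^{⊗3} ⊂ U(𝔤)^{⊗3}`) and is `𝔤`-invariant. -/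
theorem phi_of_casimir_antisymm_invariant [Field k] [CharZero k] [Fintype ι]
    (f : ι → ι → ι → k) (c : ι → ι → k)
    (hf₁ : LieAntisymm f) (hf₂ : LieJacobi f)
    (hsymm : ∀ i j, c i j = c j i) (hinv : casimirInvariant f c) :
    (∀ i j l, phiOf f c i j l = - phiOf f c j i l) ∧
    (∀ i j l, phiOf f c i j l = - phiOf f c i l j) ∧
    (∀ p i j l, adActTri f (phiOf f c) p i j l = 0) :=
  phi_of_casimir_antisymm_invariant_general f c hf₁ hf₂ hsymm hinv
end

section
/- Let 𝔤 be a finite-dimensional Lie algebra, c ∈ Sym²(𝔤) invariant, and set δ = 0 and φ = −(1/6)[c₁₂, c₂₃] ∈ ∧³(𝔤). Then (δ, φ) is a quasi-Lie bialgebra structure on 𝔤; equivalently, d_CE φ = 0, where d_CE is the Chevalley–Eilenberg differential on ∧•(𝔤)-valued cochains (invariance of φ). -/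
/-!
STATEMENT 12: For a finite-dimensional Lie algebra `𝔤` and an invariant `c ∈ Sym²(𝔤)`,
the pair `δ = 0`, `φ = -(1/6)[c₁₂,c₂₃] ∈ ∧³(𝔤)` is a quasi-Lie bialgebra structure on
`𝔤`; with `δ = 0` the conditions reduce to the invariance `d_CE φ = 0`, i.e.
`φ ∈ (∧³𝔤)^𝔤`.

In coordinates (basis `e_i`, structure constants `f`, `c = ∑ c i j • e_i ⊗ e_j`),
the commutator `[c₁₂, c₂₃]` computed in `U(𝔤)^{⊗3}` lands in `𝔤^{⊗3}` with components
`[c₁₂,c₂₃]^{ijl} = ∑ b b', c i b * f b b' j * c b' l`, so `φ` has the components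
`phiOf` below; total antisymmetry and invariance are then the stated conclusions.
-/

open Finset

variable {k ι : Type*}

/-!
Write `φ = -(1/6) [c₁₂, c₂₃]` with `[c₁₂, c₂₃]^{ijl} = ∑ c^{ib} f_{bb'}^j c^{b'l}`, the structure
tensor with two legs contracted against `c`. Since `f` is antisymmetric and `c` symmetric, this
tensor changes sign under `i ↔ l`; invariance of `c` moves `f` across a copy of `c`, which gives
cyclic symmetry, so the tensor is totally antisymmetric. The adjoint action of `e_p` acts on a
contraction by the Leibniz rule: it kills both copies of `c` by invariance and kills `f` by the
Jacobi identity, so `e_p · φ = 0`.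
-/

section

variable [Field k] [Fintype ι] {f : ι → ι → ι → k} {c : ι → ι → k}

theorem casimirInvariant.sum_mul_fst (hinv : casimirInvariant f c) (p i j : ι) :
    ∑ a, f p a i * c a j = -∑ a, f p a j * c i a :=
  eq_neg_of_add_eq_zero_left <| by rw [← sum_add_distrib]; exact hinv p i j

theorem casimirInvariant.sum_mul_snd (hinv : casimirInvariant f c) (p i j : ι) :
    ∑ a, f p a j * c i a = -∑ a, f p a i * c a j := by
  rw [hinv.sum_mul_fst, neg_neg]

theorem LieJacobi.leibniz_lie (hf₁ : LieAntisymm f) (hf₂ : LieJacobi f) (p x y j : ι) :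
    ∑ b, f x y b * f p b j = ∑ b, f p x b * f b y j + ∑ b, f x b j * f p y b := by
  rw [← sub_eq_zero, ← sum_add_distrib, ← sum_sub_distrib, ← hf₂ x p y j]
  refine sum_congr rfl fun b _ => ?_
  rw [hf₁ x p b, hf₁ b x j, hf₁ y x b, hf₁ b p j]
  ring

theorem adActTri_mul_left (f φ : ι → ι → ι → k) (r : k) (p i j l : ι) :
    adActTri f (fun i j l => r * φ i j l) p i j l = r * adActTri f φ p i j l := by
  simp only [adActTri, mul_sum]
  exact sum_congr rfl fun _ _ => by ring

/-- The components of `[c₁₂, c₂₃]`. -/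
def cBracket (f : ι → ι → ι → k) (c : ι → ι → k) (i j l : ι) : k :=
  ∑ b, ∑ b', c i b * f b b' j * c b' l

theorem phiOf_eq_mul_cBracket (f : ι → ι → ι → k) (c : ι → ι → k) :
    phiOf f c = fun i j l => -(1 / 6 : k) * cBracket f c i j l :=
  rfl

section Antisymmetry

variable (hf₁ : LieAntisymm f) (hsymm : ∀ i j, c i j = c j i)
include hf₁ hsymm

theorem cBracket_swap_fst_thd (i j l : ι) : cBracket f c l j i = -cBracket f c i j l := by
  rw [cBracket, sum_comm, cBracket, ← sum_neg_distrib]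
  refine sum_congr rfl fun x _ => ?_
  rw [← sum_neg_distrib]
  refine sum_congr rfl fun y _ => ?_
  rw [hf₁ y x j, hsymm l y, hsymm x i]
  ring

theorem cBracket_cycle (hinv : casimirInvariant f c) (i j l : ι) :
    cBracket f c i j l = cBracket f c j l i := by
  calc cBracket f c i j l
      = ∑ b, c i b * ∑ b', f b b' j * c b' l := by
        simp only [cBracket, mul_sum, mul_assoc]
    _ = ∑ b, ∑ a, -(c i b * f b a l * c j a) := by
        simp only [hinv.sum_mul_fst, mul_neg, mul_sum, ← sum_neg_distrib, mul_assoc]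
    _ = cBracket f c j l i := by
        rw [sum_comm, cBracket]
        refine sum_congr rfl fun a _ => sum_congr rfl fun b _ => ?_
        rw [hf₁ b a l, hsymm i b]
        ring

theorem cBracket_swap_snd_thd (hinv : casimirInvariant f c) (i j l : ι) :
    cBracket f c i l j = -cBracket f c i j l := by
  rw [cBracket_cycle hf₁ hsymm hinv, cBracket_swap_fst_thd hf₁ hsymm]

theorem cBracket_swap_fst_snd (hinv : casimirInvariant f c) (i j l : ι) :
    cBracket f c j i l = -cBracket f c i j l := by
  rw [cBracket_cycle hf₁ hsymm hinv, cBracket_swap_snd_thd hf₁ hsymm hinv]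

end Antisymmetry

theorem sum_mul_cBracket_fst (hinv : casimirInvariant f c) (p i j l : ι) :
    ∑ a, f p a i * cBracket f c a j l
      = -∑ x, ∑ y, c i x * c y l * ∑ b, f p x b * f b y j := by
  calc ∑ a, f p a i * cBracket f c a j l
      = ∑ b, ∑ y, (∑ a, f p a i * c a b) * (f b y j * c y l) := by
        simp only [cBracket, mul_sum, sum_mul]
        rw [sum_comm]
        refine sum_congr rfl fun _ _ => ?_
        rw [sum_comm]
        exact sum_congr rfl fun _ _ => sum_congr rfl fun _ _ => by ring
    _ = -∑ x, ∑ y, c i x * c y l * ∑ b, f p x b * f b y j := by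
        simp only [hinv.sum_mul_fst, neg_mul, sum_neg_distrib, mul_sum, sum_mul]
        rw [sum_comm_cycle]
        refine congrArg _ (sum_congr rfl fun _ _ => ?_)
        rw [sum_comm]
        exact sum_congr rfl fun _ _ => sum_congr rfl fun _ _ => by ring

theorem sum_mul_cBracket_snd (p i j l : ι) :
    ∑ a, f p a j * cBracket f c i a l
      = ∑ x, ∑ y, c i x * c y l * ∑ b, f x y b * f p b j := by
  simp only [cBracket, mul_sum]
  rw [sum_comm]
  refine sum_congr rfl fun _ _ => ?_
  rw [sum_comm]
  exact sum_congr rfl fun _ _ => sum_congr rfl fun _ _ => by ring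

theorem sum_mul_cBracket_thd (hinv : casimirInvariant f c) (p i j l : ι) :
    ∑ a, f p a l * cBracket f c i j a
      = -∑ x, ∑ y, c i x * c y l * ∑ b, f x b j * f p y b := by
  calc ∑ a, f p a l * cBracket f c i j a
      = ∑ x, ∑ b, c i x * f x b j * ∑ a, f p a l * c b a := by
        simp only [cBracket, mul_sum]
        rw [sum_comm]
        refine sum_congr rfl fun _ _ => ?_
        rw [sum_comm]
        exact sum_congr rfl fun _ _ => sum_congr rfl fun _ _ => by ring
    _ = -∑ x, ∑ y, c i x * c y l * ∑ b, f x b j * f p y b := by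
        simp only [hinv.sum_mul_snd, mul_neg, sum_neg_distrib, mul_sum]
        refine congrArg _ (sum_congr rfl fun _ _ => ?_)
        rw [sum_comm]
        exact sum_congr rfl fun _ _ => sum_congr rfl fun _ _ => by ring

theorem adActTri_cBracket (hf₁ : LieAntisymm f) (hf₂ : LieJacobi f)
    (hinv : casimirInvariant f c) (p i j l : ι) :
    adActTri f (cBracket f c) p i j l = 0 := by
  rw [adActTri, sum_add_distrib, sum_add_distrib, sum_mul_cBracket_fst hinv,
    sum_mul_cBracket_snd, sum_mul_cBracket_thd hinv, ← sum_neg_distrib, ← sum_neg_distrib,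
    ← sum_add_distrib, ← sum_add_distrib]
  refine sum_eq_zero fun x _ => ?_
  rw [← sum_neg_distrib, ← sum_neg_distrib, ← sum_add_distrib, ← sum_add_distrib]
  refine sum_eq_zero fun y _ => ?_
  rw [hf₂.leibniz_lie hf₁]
  ring

end

theorem zero_cobracket_phiOf_isQuasiLieBialgebra_general [Field k] [Fintype ι]
    (f : ι → ι → ι → k) (c : ι → ι → k)
    (hf₁ : LieAntisymm f) (hf₂ : LieJacobi f)
    (hsymm : ∀ i j, c i j = c j i) (hinv : casimirInvariant f c) :
    IsQuasiLieBialgebra f (fun _ _ _ => (0 : k)) (phiOf f c) := by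
  refine ⟨fun _ _ _ => neg_zero.symm, fun i j l => ?_, fun i j l => ?_,
    fun _ _ _ _ => by simp [dCEone], fun p i j l => ?_, fun _ _ _ _ => by simp [bigBrTri]⟩
  · simp only [phiOf_eq_mul_cBracket, cBracket_swap_fst_snd hf₁ hsymm hinv j i l, mul_neg]
  · simp only [phiOf_eq_mul_cBracket, cBracket_swap_snd_thd hf₁ hsymm hinv i l j, mul_neg]
  · rw [phiOf_eq_mul_cBracket, adActTri_mul_left, adActTri_cBracket hf₁ hf₂ hinv]
    simp [coJac]

/-- If `c ∈ Sym²(𝔤)` is invariant, then `δ = 0` together with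
`φ = -(1/6)[c₁₂,c₂₃] ∈ ∧³(𝔤)` is a quasi-Lie bialgebra structure on `𝔤`
(equivalently, `φ` is antisymmetric and `d_CE φ = 0`). -/
theorem zero_cobracket_phiOf_isQuasiLieBialgebra [Field k] [CharZero k] [Fintype ι]
    [DecidableEq ι] (f : ι → ι → ι → k) (c : ι → ι → k)
    (hf₁ : LieAntisymm f) (hf₂ : LieJacobi f)
    (hsymm : ∀ i j, c i j = c j i) (hinv : casimirInvariant f c) :
    IsQuasiLieBialgebra f (fun _ _ _ => (0 : k)) (phiOf f c) :=
  zero_cobracket_phiOf_isQuasiLieBialgebra_general f c hf₁ hf₂ hsymm hinv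
end

section
/- Let H ⊂ G be algebraic groups with Lie algebras 𝔥 ⊂ 𝔤 and suppose c ∈ Sym²(𝔤)^G maps to zero in Sym²(𝔤/𝔥)^H. Fix a splitting 𝔤 = 𝔥 ⊕ 𝔤/𝔥 and write c = P + Q. Define F on generators of the Chevalley–Eilenberg complex by F(eⁱ) = eⁱ + (1/2)P^{ij}e_j and F(ẽⁱ) = Q^{ji}e_j, extended as a map of graded commutative algebras C•(𝔤, k) → C•(𝔥, Sym(𝔥[-1])). Then F is a cochain map: it intertwines the Chevalley–Eilenberg differential of 𝔤 with the differential on C•(𝔥, Sym(𝔥[-1])) twisted by the quasi-Lie bialgebra structure (δ, φ) given by δ^{ij}_k = (1/2)(A^j_{ka}Q^{ia} − A^i_{ka}Q^{ja}) and φ^{ijk} = (1/8)f^i_{ab}P^{aj}P^{bk} + (1/4)Q^{ia}(C^k_{ab}Q^{jb} − C^j_{ab}Q^{kb}) + (1/8)P^{ia}(A^k_{ab}Q^{jb} − A^j_{ab}Q^{kb}). -/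
/-!
Because `F` is an algebra map and both differentials are derivations, it suffices to
check `F ∘ d = d ∘ F` on generators, which gives the three coefficient identities of the
statement. Each is an invariance identity for `c` contracted with `Q` or `P`: for `ẽⁱ`,
identity (3) turns `Q^{ci} A^b_{cx}` into `B`- and `D`-terms; the linear part of `eⁱ` is
identity (2) itself; for the quadratic part of `eⁱ`, identity (1) moves the index `i`
onto the structure constants, and antisymmetry of `C` merges the two resulting `C`-terms.
Away from the factors `1/2` in `δ` these are identities over any commutative ring.
-/

open Finset

variable {k ι : Type*} [Field k] [CharZero k] [Fintype ι] [DecidableEq ι]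

/-- `δ^{ij}_k = (1/2)(A^j_{ka} Q^{ia} − A^i_{ka} Q^{ja})`. -/
def deltaForm (A : ι → ι → ι → k) (Q : ι → ι → k) (kk i j : ι) : k :=
  (1/2 : k) * ∑ a, (A kk a j * Q i a - A kk a i * Q j a)

/-- `φ^{ijk} = (1/8) f^i_{ab} P^{aj} P^{bk} + (1/4) Q^{ia}(C^k_{ab} Q^{jb} − C^j_{ab} Q^{kb})
  + (1/8) P^{ia}(A^k_{ab} Q^{jb} − A^j_{ab} Q^{kb})`. -/
def phiForm (f A C : ι → ι → ι → k) (P Q : ι → ι → k) (i j l : ι) : k :=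
  (1/8 : k) * (∑ a, ∑ b, f a b i * P a j * P b l)
    + (1/4 : k) * (∑ a, ∑ b, Q i a * (C a b l * Q j b - C a b j * Q l b))
    + (1/8 : k) * (∑ a, ∑ b, P i a * (A a b l * Q j b - A a b j * Q l b))

section

variable {R κ : Type*} [CommRing R] [Fintype κ] {f A B C D : κ → κ → κ → R} {P Q : κ → κ → R}

theorem cochain_identity_tilde_generator (hP : ∀ i j, P i j = P j i)
    (h3 : ∀ i a kk, ∑ j, (A j kk i * Q j a + B j kk a * P i j + D j kk a * Q i j) = 0)
    (i a b : κ) :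
    ∑ c, ∑ x, Q c i * (A c x b * Q a x - A c x a * Q b x) =
      (∑ j, ∑ kk, (B j kk i * P j a * Q b kk + D j kk i * Q a j * Q b kk))
        - ∑ j, ∑ kk, (B j kk i * P j b * Q a kk + D j kk i * Q b j * Q a kk) := by
  have hAQ : ∀ b x, ∑ c, A c x b * Q c i = -∑ j, (B j x i * P j b + D j x i * Q b j) := by
    intro b x
    rw [eq_neg_iff_add_eq_zero, ← sum_add_distrib, ← h3 b i x]
    exact sum_congr rfl fun j _ => by rw [hP]; ring
  calc ∑ c, ∑ x, Q c i * (A c x b * Q a x - A c x a * Q b x)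
      = ∑ x, (Q b x * -∑ c, A c x a * Q c i - Q a x * -∑ c, A c x b * Q c i) := by
        simp only [mul_sum, ← sum_sub_distrib, mul_neg, ← sum_neg_distrib]
        rw [sum_comm]
        exact sum_congr rfl fun x _ => sum_congr rfl fun c _ => by ring
    _ = _ := by
        simp only [hAQ, neg_neg, mul_sum, ← sum_sub_distrib]
        rw [sum_comm]
        exact sum_congr rfl fun j _ => sum_congr rfl fun x _ => by ring

theorem cochain_identity_generator_linear (hf : ∀ i j l, f i j l = - f j i l)
    (hP : ∀ i j, P i j = P j i)
    (h2 : ∀ i a j, ∑ kk, (A j kk i * Q a kk - f kk j i * P kk a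
            + A j kk a * Q i kk - f kk j a * P kk i) = 0)
    (i j b : κ) :
    ∑ kk, P i kk * f kk j b - ∑ kk, (A j kk b * Q i kk - A j kk i * Q b kk) =
      2 * ∑ kk, A j kk i * Q b kk + ∑ kk, f j kk i * P kk b := by
  rw [← sub_eq_zero, ← neg_eq_zero, ← h2 i b j]
  simp only [mul_sum, ← sum_sub_distrib, ← sum_add_distrib, ← sum_neg_distrib]
  exact sum_congr rfl fun kk _ => by rw [hf j kk i, hP i kk]; ring

theorem cochain_identity_generator_quadratic (hC : ∀ i j l, C i j l = - C j i l)
    (hP : ∀ i j, P i j = P j i)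
    (h1 : ∀ i a kk, ∑ j, (A j kk i * P j a + C j kk i * Q a j
            + A j kk a * P j i + C j kk a * Q i j) = 0)
    (i a b : κ) :
    (∑ x, ∑ y, Q i x * (C x y b * Q a y - C x y a * Q b y))
        + ∑ x, ∑ y, P i x * (A x y b * Q a y - A x y a * Q b y) =
      (∑ j, ∑ kk, A j kk i * P j a * Q b kk) - (∑ j, ∑ kk, A j kk i * P j b * Q a kk)
        + 2 * ∑ j, ∑ kk, C j kk i * Q a j * Q b kk := by
  have hAC : ∀ a y, ∑ x, (A x y a * P x i + C x y a * Q i x) =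
      -∑ x, (A x y i * P x a + C x y i * Q a x) := by
    intro a y
    rw [eq_neg_iff_add_eq_zero, ← sum_add_distrib, ← h1 i a y]
    exact sum_congr rfl fun x _ => by ring
  have hC_swap : ∑ x, ∑ y, C x y i * Q b x * Q a y = -∑ x, ∑ y, C x y i * Q a x * Q b y := by
    rw [sum_comm, ← sum_neg_distrib]
    exact sum_congr rfl fun x _ => by
      rw [← sum_neg_distrib]; exact sum_congr rfl fun y _ => by rw [hC]; ring
  calc (∑ x, ∑ y, Q i x * (C x y b * Q a y - C x y a * Q b y))
        + ∑ x, ∑ y, P i x * (A x y b * Q a y - A x y a * Q b y)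
      = ∑ y, (Q a y * ∑ x, (A x y b * P x i + C x y b * Q i x)
          - Q b y * ∑ x, (A x y a * P x i + C x y a * Q i x)) := by
        simp only [mul_sum, ← sum_sub_distrib, ← sum_add_distrib]
        rw [sum_comm]
        exact sum_congr rfl fun y _ => sum_congr rfl fun x _ => by rw [hP]; ring
    _ = ∑ x, ∑ y, (A x y i * P x a * Q b y - A x y i * P x b * Q a y
          + C x y i * Q a x * Q b y - C x y i * Q b x * Q a y) := by
        simp only [hAC, mul_neg, mul_sum, ← sum_sub_distrib, ← sum_neg_distrib]
        rw [sum_comm]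
        exact sum_congr rfl fun x _ => sum_congr rfl fun y _ => by ring
    _ = _ := by
        simp only [sum_add_distrib, sum_sub_distrib, hC_swap]
        ring

end

theorem sum_mul_deltaForm {K n : Type*} [Field K] [Fintype n] (A : n → n → n → K)
    (Q : n → n → K) (M : n → K) (a b : n) :
    ∑ c, M c * deltaForm A Q c a b =
      (1/2 : K) * ∑ c, ∑ x, M c * (A c x b * Q a x - A c x a * Q b x) := by
  simp only [deltaForm, mul_sum]
  exact sum_congr rfl fun c _ => sum_congr rfl fun x _ => by ring

theorem coisotropic_cochain_map_general
    (f A B C D : ι → ι → ι → k) (P Q : ι → ι → k)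
    (hf : ∀ i j l, f i j l = - f j i l)
    (hC : ∀ i j l, C i j l = - C j i l)
    (hP : ∀ i j, P i j = P j i)
    (h1 : ∀ i a kk, ∑ j, (A j kk i * P j a + C j kk i * Q a j
            + A j kk a * P j i + C j kk a * Q i j) = 0)
    (h2 : ∀ i a j, ∑ kk, (A j kk i * Q a kk - f kk j i * P kk a
            + A j kk a * Q i kk - f kk j a * P kk i) = 0)
    (h3 : ∀ i a kk, ∑ j, (A j kk i * Q j a + B j kk a * P i j + D j kk a * Q i j) = 0) :
    -- compatibility on the generators `ẽⁱ`:
    (∀ i a b, ∑ c, Q c i * deltaForm A Q c a b =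
        (1/2 : k) * ((∑ j, ∑ kk, (B j kk i * P j a * Q b kk + D j kk i * Q a j * Q b kk))
          - (∑ j, ∑ kk, (B j kk i * P j b * Q a kk + D j kk i * Q b j * Q a kk)))) ∧
    -- compatibility on the generators `eⁱ`, linear part:
    (∀ i j b, (∑ kk, P i kk * f kk j b) - 2 * deltaForm A Q j i b =
        2 * (∑ kk, A j kk i * Q b kk) + ∑ kk, f j kk i * P kk b) ∧
    -- compatibility on the generators `eⁱ`, quadratic part:
    (∀ i a b, phiForm f A C P Q i a b + (1/4 : k) * ∑ c, P i c * deltaForm A Q c a b =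
        (1/4 : k) * (∑ j, ∑ kk, A j kk i * P j a * Q b kk)
          - (1/4 : k) * (∑ j, ∑ kk, A j kk i * P j b * Q a kk)
          + (1/2 : k) * (∑ j, ∑ kk, C j kk i * Q a j * Q b kk)
          + (1/8 : k) * (∑ j, ∑ kk, f j kk i * P j a * P kk b)) := by
  refine ⟨fun i a b => ?_, fun i j b => ?_, fun i a b => ?_⟩
  · rw [sum_mul_deltaForm, cochain_identity_tilde_generator hP h3]
  · simp only [deltaForm]
    linear_combination cochain_identity_generator_linear hf hP h2 i j b
  · simp only [phiForm, sum_mul_deltaForm]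
    linear_combination (1/4 : k) * cochain_identity_generator_quadratic hC hP h1 i a b

/-- Under the invariance identities (1)–(5) for `c = P + Q`, the
generator-level cochain-map identities for
`F(eⁱ) = eⁱ + (1/2)P^{ij}e_j`, `F(ẽⁱ) = Q^{ji}e_j` hold, i.e. `F(d ẽⁱ) = d F(ẽⁱ)` and
`F(d eⁱ) = d F(eⁱ)` where the target differential is twisted by `(δ, φ)` given by
`deltaForm` and `phiForm`; hence `F` is a cochain map. -/
theorem coisotropic_cochain_map
    (f A B C D : ι → ι → ι → k) (P Q : ι → ι → k)
    (hf : ∀ i j l, f i j l = - f j i l)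
    (hC : ∀ i j l, C i j l = - C j i l)
    (hD : ∀ i j l, D i j l = - D j i l)
    (hP : ∀ i j, P i j = P j i)
    (h1 : ∀ i a kk, ∑ j, (A j kk i * P j a + C j kk i * Q a j
            + A j kk a * P j i + C j kk a * Q i j) = 0)
    (h2 : ∀ i a j, ∑ kk, (A j kk i * Q a kk - f kk j i * P kk a
            + A j kk a * Q i kk - f kk j a * P kk i) = 0)
    (h3 : ∀ i a kk, ∑ j, (A j kk i * Q j a + B j kk a * P i j + D j kk a * Q i j) = 0)
    (h4 : ∀ i a j, ∑ kk, f kk j i * Q kk a = ∑ kk, B j kk a * Q i kk)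
    (h5 : ∀ i a kk, ∑ j, (B j kk i * Q j a + B j kk a * Q j i) = 0) :
    -- compatibility on the generators `ẽⁱ`:
    (∀ i a b, ∑ c, Q c i * deltaForm A Q c a b =
        (1/2 : k) * ((∑ j, ∑ kk, (B j kk i * P j a * Q b kk + D j kk i * Q a j * Q b kk))
          - (∑ j, ∑ kk, (B j kk i * P j b * Q a kk + D j kk i * Q b j * Q a kk)))) ∧
    -- compatibility on the generators `eⁱ`, linear part:
    (∀ i j b, (∑ kk, P i kk * f kk j b) - 2 * deltaForm A Q j i b =
        2 * (∑ kk, A j kk i * Q b kk) + ∑ kk, f j kk i * P kk b) ∧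
    -- compatibility on the generators `eⁱ`, quadratic part:
    (∀ i a b, phiForm f A C P Q i a b + (1/4 : k) * ∑ c, P i c * deltaForm A Q c a b =
        (1/4 : k) * (∑ j, ∑ kk, A j kk i * P j a * Q b kk)
          - (1/4 : k) * (∑ j, ∑ kk, A j kk i * P j b * Q a kk)
          + (1/2 : k) * (∑ j, ∑ kk, C j kk i * Q a j * Q b kk)
          + (1/8 : k) * (∑ j, ∑ kk, f j kk i * P j a * P kk b)) :=
  coisotropic_cochain_map_general f A B C D P Q hf hC hP h1 h2 h3
end
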